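/- arXiv:1604.00745 — 4 statements merged into one kernel-verified Lean document; each statement's English description precedes it below -/
import Mathlib

section
/- Let k be a field of characteristic p > 0 and let δ be a k-derivation of k[x,y] with δ(x) = x, δ(y) = i·y for some i ∈ 𝔽_p. Then the map φ = 1 − δ^{p−1} : k[x,y] → k[x,y] takes values in the constant ring k[x,y]^δ and restricts to the identity on k[x,y]^δ; i.e., it is a k[x,y]^δ-module splitting of the inclusion k[x,y]^δ ⊆ k[x,y]. -/
open MvPolynomial

private lemma mono_eq {k : Type*} [CommSemiring k] (d : Fin 2 →₀ ℕ) (c : k) :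
    monomial d c = C c * (X 0 ^ d 0 * X 1 ^ d 1) := by
  rw [monomial_eq]
  congr 1
  rw [Finsupp.prod_fintype _ _ (fun a => pow_zero _), Fin.prod_univ_two]

private lemma der_pow {k : Type*} [CommRing k]
    (δ : Derivation k (MvPolynomial (Fin 2) k) (MvPolynomial (Fin 2) k))
    (a : MvPolynomial (Fin 2) k) (c : k) (ha : δ a = C c * a) (n : ℕ) :
    δ (a ^ n) = C (n : k) * C c * a ^ n := by
  induction n with
  | zero => simp
  | succ n ih =>
    rw [pow_succ, Derivation.leibniz, ih, ha, smul_eq_mul, smul_eq_mul,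
      Nat.cast_add, Nat.cast_one, map_add, map_one]
    ring

/-- For the derivation `δ` of `k[x,y]` with `δ x = x`, `δ y = i·y` (`i ∈ 𝔽_p`), the map
`φ = 1 − δ^(p−1)` takes values in the constant ring `k[x,y]^δ`, restricts to the identity
on `k[x,y]^δ`, and is `k[x,y]^δ`-linear: it splits the inclusion `k[x,y]^δ ⊆ k[x,y]`. -/
theorem stmt2 (k : Type*) [Field k] (p : ℕ) [hp : Fact p.Prime] [CharP k p]
    (i : ZMod p)
    (δ : Derivation k (MvPolynomial (Fin 2) k) (MvPolynomial (Fin 2) k))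
    (hx : δ (X 0) = X 0)
    (hy : δ (X 1) = C (ZMod.castHom (dvd_refl p) k i) * X 1)
    (φ : MvPolynomial (Fin 2) k →ₗ[k] MvPolynomial (Fin 2) k)
    (hφ : φ = LinearMap.id - δ.toLinearMap ^ (p - 1)) :
    (∀ f : MvPolynomial (Fin 2) k, δ (φ f) = 0) ∧
    (∀ f : MvPolynomial (Fin 2) k, δ f = 0 → φ f = f) ∧
    (∀ r f : MvPolynomial (Fin 2) k, δ r = 0 → φ (r * f) = r * φ f) := by
  have hp1 : p - 1 ≠ 0 := by
    have := hp.out.two_le; omega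
  set ch : ZMod p →+* k := ZMod.castHom (dvd_refl p) k with hch
  -- the eigenvalue of a monomial with exponent `d`
  set μ : (Fin 2 →₀ ℕ) → ZMod p := fun d => (d 0 : ZMod p) + i * (d 1 : ZMod p) with hμ
  set ν : (Fin 2 →₀ ℕ) → k := fun d => ch (μ d) with hν
  have hνμ : ∀ d, ν d = 0 ↔ μ d = 0 := by
    intro d
    constructor
    · intro h
      have h' : ch (μ d) = 0 := h
      exact ch.injective (by rw [map_zero]; exact h')
    · intro h
      simp [hν, h]
  -- δ on a monomial
  have L1 : ∀ (d : Fin 2 →₀ ℕ) (c : k), δ (monomial d c) = C (ν d) * monomial d c := by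
    intro d c
    have h0 : δ (X 0 ^ d 0) = C ((d 0 : k)) * C (1 : k) * X (0 : Fin 2) ^ d 0 :=
      der_pow δ (X 0) 1 (by simpa using hx) _
    have h1 : δ (X 1 ^ d 1) = C ((d 1 : k)) * C (ch i) * X (1 : Fin 2) ^ d 1 :=
      der_pow δ (X 1) (ch i) hy _
    have hνd : (C (ν d) : MvPolynomial (Fin 2) k) = C ((d 0 : k)) + C (ch i) * C ((d 1 : k)) := by
      simp [hν, hμ, map_add, map_mul, map_natCast, ← C_mul]
    rw [mono_eq, Derivation.leibniz, (show δ (C c) = 0 from δ.map_algebraMap c), smul_zero, add_zero, Derivation.leibniz,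
      h0, h1, hνd]
    simp only [smul_eq_mul, C_1, mul_one]
    ring
  -- δ acts coefficient-wise by ν
  have L2 : ∀ (f : MvPolynomial (Fin 2) k) (d : Fin 2 →₀ ℕ),
      coeff d (δ f) = ν d * coeff d f := by
    intro f d
    conv_lhs => rw [f.as_sum, map_sum]
    simp_rw [L1, coeff_sum, coeff_C_mul, coeff_monomial, mul_ite, mul_zero]
    rw [Finset.sum_ite_eq' f.support d (fun v => ν v * coeff v f)]
    by_cases h : d ∈ f.support
    · simp [h]
    · rw [MvPolynomial.notMem_support_iff] at h
      simp [h]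
  -- iterates of δ
  have L3 : ∀ (n : ℕ) (f : MvPolynomial (Fin 2) k) (d : Fin 2 →₀ ℕ),
      coeff d ((δ.toLinearMap ^ n) f) = ν d ^ n * coeff d f := by
    intro n
    induction n with
    | zero => intro f d; simp
    | succ n ih =>
      intro f d
      rw [pow_succ', Module.End.mul_apply]
      show coeff d (δ _) = _
      rw [L2, ih, pow_succ']
      ring
  -- coefficients of φ f
  have L4 : ∀ (f : MvPolynomial (Fin 2) k) (d : Fin 2 →₀ ℕ),
      coeff d (φ f) = if μ d = 0 then coeff d f else 0 := by
    intro f d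
    rw [hφ, LinearMap.sub_apply, LinearMap.id_apply, coeff_sub, L3]
    by_cases h : μ d = 0
    · rw [if_pos h]
      have : ν d = 0 := (hνμ d).2 h
      rw [this, zero_pow hp1, zero_mul, sub_zero]
    · rw [if_neg h]
      have : ν d ^ (p - 1) = 1 := by
        rw [hν]
        simp only
        rw [← map_pow, ZMod.pow_card_sub_one_eq_one h, map_one]
      rw [this, one_mul, sub_self]
  refine ⟨?_, ?_, ?_⟩
  · -- φ f is a constant
    intro f
    apply MvPolynomial.ext
    intro d
    rw [L2, coeff_zero]
    by_cases h : μ d = 0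
    · have : ν d = 0 := (hνμ d).2 h
      rw [this, zero_mul]
    · rw [L4, if_neg h, mul_zero]
  · -- φ is identity on constants
    intro f hf
    apply MvPolynomial.ext
    intro d
    rw [L4]
    by_cases h : μ d = 0
    · rw [if_pos h]
    · rw [if_neg h]
      have h2 : ν d * coeff d f = 0 := by
        rw [← L2, hf, coeff_zero]
      rcases mul_eq_zero.1 h2 with h3 | h3
      · exact absurd ((hνμ d).1 h3) h
      · rw [h3]
  · -- φ is linear over constants
    intro r f hr
    have key : ∀ (n : ℕ) (g : MvPolynomial (Fin 2) k),
        (δ.toLinearMap ^ n) (r * g) = r * (δ.toLinearMap ^ n) g := by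
      intro n
      induction n with
      | zero => intro g; simp
      | succ n ih =>
        intro g
        rw [pow_succ', Module.End.mul_apply, Module.End.mul_apply]
        rw [ih g]
        show δ (r * (δ.toLinearMap ^ n) g) = r * δ ((δ.toLinearMap ^ n) g)
        rw [Derivation.leibniz, hr, smul_zero, add_zero, smul_eq_mul]
    rw [hφ, LinearMap.sub_apply, LinearMap.sub_apply, LinearMap.id_apply,
      LinearMap.id_apply, key, mul_sub]
end

section
/- Let k be a field of characteristic 2 and let δ be the k-derivation of k[x,y] with δ(x) = x² and δ(y) = y². Then the ring of constants k[x,y]^δ equals k[x², y², x²y + xy²], and this ring is isomorphic as a k-algebra to k[X,Y,Z]/(Z² + X²Y + XY²) via X ↦ x², Y ↦ y², Z ↦ x²y + xy². -/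
/-!
In characteristic 2, `k[x,y]` is free over `k[x², y²]` with basis `1, x, y, xy`: the coordinates
are unique because `∂/∂x` and `∂/∂y` kill `k[x², y²]`. Every derivation is `k[x², y²]`-linear, and
`δ` sends `a + xb + yc + xyd` to `x²b + y²c + (x²y + xy²)d`; so `δ f = 0` forces `d = 0` and
`x²b + y²c = 0`, whence `f = a + (x²y + xy²)g` with `a, g ∈ k[x², y²]`, the image of
`a(X,Y) + Z g(X,Y)`. Modulo `Z² + X²Y + XY²` every polynomial is `a(X,Y) + Z b(X,Y)`, whose image
`a(x²,y²) + (x²y + xy²) b(x²,y²)` vanishes only for `a = b = 0`, by the same freeness.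
-/

namespace Derivation

variable {R A M : Type*} [CommSemiring R] [CommSemiring A] [Algebra R A] [AddCommMonoid M]
  [Module A M] [Module R M]

theorem map_pow_char (D : Derivation R A M) (p : ℕ) [CharP A p] (a : A) : D (a ^ p) = 0 := by
  rw [leibniz_pow, ← Nat.cast_smul_eq_nsmul A, CharP.cast_eq_zero, zero_smul]

end Derivation

namespace MvPolynomial

section

variable {R σ M : Type*} [CommSemiring R] [AddCommMonoid M] [Module (MvPolynomial σ R) M]
  [Module R M]

theorem derivation_expand_eq_zero (p : ℕ) [CharP R p]
    (D : Derivation R (MvPolynomial σ R) M) (f : MvPolynomial σ R) : D (expand p f) = 0 := by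
  induction f using MvPolynomial.induction_on with
  | C r => rw [expand_C, ← algebraMap_eq, D.map_algebraMap]
  | add f g hf hg => rw [map_add, map_add, hf, hg, add_zero]
  | mul_X f i hf =>
    rw [map_mul, expand_X, D.leibniz, hf, D.map_pow_char, smul_zero, smul_zero, add_zero]

end

section

variable {R σ : Type*} [CommRing R]

theorem eq_zero_of_add_X_mul_eq_zero {i : σ} {P Q : MvPolynomial σ R} (hP : pderiv i P = 0)
    (hQ : pderiv i Q = 0) (h : P + X i * Q = 0) : P = 0 ∧ Q = 0 := by
  have hQ' : Q = 0 := by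
    simpa [Derivation.leibniz, hP, hQ] using congrArg (pderiv i) h
  subst hQ'
  simpa using h

theorem expand_two_decomposition_eq_zero [CharP R 2] {i j : σ} (hij : i ≠ j)
    {a b c d : MvPolynomial σ R}
    (h : expand 2 a + X i * expand 2 b + X j * expand 2 c + X i * X j * expand 2 d = 0) :
    a = 0 ∧ b = 0 ∧ c = 0 ∧ d = 0 := by
  have hpj : ∀ e : MvPolynomial σ R, pderiv i (X j * expand 2 e) = 0 := fun e => by
    simp [Derivation.leibniz, pderiv_X_of_ne hij.symm, derivation_expand_eq_zero 2]
  obtain ⟨hac, hbd⟩ := eq_zero_of_add_X_mul_eq_zero (i := i)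
    (P := expand 2 a + X j * expand 2 c) (Q := expand 2 b + X j * expand 2 d)
    (by rw [map_add, hpj, derivation_expand_eq_zero, add_zero])
    (by rw [map_add, hpj, derivation_expand_eq_zero, add_zero])
    (by linear_combination h)
  obtain ⟨ha, hc⟩ := eq_zero_of_add_X_mul_eq_zero (derivation_expand_eq_zero 2 _ a)
    (derivation_expand_eq_zero 2 _ c) hac
  obtain ⟨hb, hd⟩ := eq_zero_of_add_X_mul_eq_zero (derivation_expand_eq_zero 2 _ b)
    (derivation_expand_eq_zero 2 _ d) hbd
  rw [expand_eq_zero two_pos] at ha hb hc hd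
  exact ⟨ha, hb, hc, hd⟩

theorem exists_eq_X_mul_of_X_mul_add_X_mul_eq_zero [IsDomain R] {i j : σ} (hij : i ≠ j)
    {b c : MvPolynomial σ R} (h : X i * b + X j * c = 0) :
    ∃ g, b = X j * g ∧ c = -(X i * g) := by
  have hdvd : X j ∣ X i * b := ⟨-c, by linear_combination h⟩
  obtain ⟨g, rfl⟩ := (X_dvd_mul_iff.mp hdvd).resolve_left (by rwa [X_dvd_X, eq_comm])
  refine ⟨g, rfl, ?_⟩
  rw [← X_mul_cancel_left_iff (i := j)]
  linear_combination h

theorem exists_expand_two_decomposition (f : MvPolynomial (Fin 2) R) :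
    ∃ a b c d, f = expand 2 a + X 0 * expand 2 b + X 1 * expand 2 c + X 0 * X 1 * expand 2 d := by
  induction f using MvPolynomial.induction_on with
  | C r => exact ⟨C r, 0, 0, 0, by simp⟩
  | add f g hf hg =>
    obtain ⟨a, b, c, d, rfl⟩ := hf
    obtain ⟨a', b', c', d', rfl⟩ := hg
    exact ⟨a + a', b + b', c + c', d + d', by simp only [map_add]; ring⟩
  | mul_X f i hf =>
    obtain ⟨a, b, c, d, rfl⟩ := hf
    match i with
    | 0 => exact ⟨X 0 * b, a, X 0 * d, c, by simp only [map_mul, expand_X]; ring⟩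
    | 1 => exact ⟨X 1 * c, X 1 * d, a, b, by simp only [map_mul, expand_X]; ring⟩

theorem exists_eq_X_last_sq_add_mul_add {n : ℕ} (c : MvPolynomial (Fin n) R)
    (q : MvPolynomial (Fin (n + 1)) R) :
    ∃ h a b, q = (X (Fin.last n) ^ 2 + rename Fin.castSucc c) * h + rename Fin.castSucc a
      + rename Fin.castSucc b * X (Fin.last n) := by
  induction q using MvPolynomial.induction_on with
  | C r => exact ⟨0, C r, 0, by simp⟩
  | add f g hf hg =>
    obtain ⟨h, a, b, rfl⟩ := hf
    obtain ⟨h', a', b', rfl⟩ := hg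
    exact ⟨h + h', a + a', b + b', by simp only [map_add]; ring⟩
  | mul_X f i hf =>
    obtain ⟨h, a, b, rfl⟩ := hf
    induction i using Fin.lastCases with
    | last => exact ⟨h * X (Fin.last n) + rename Fin.castSucc b, -(b * c), a,
        by simp only [map_mul, map_neg]; ring⟩
    | cast i =>
      exact ⟨h * X i.castSucc, a * X i, b * X i, by simp only [map_mul, rename_X]; ring⟩

end

section

variable (R : Type*) [CommRing R]

noncomputable def constantsPresentation : MvPolynomial (Fin 3) R →ₐ[R] MvPolynomial (Fin 2) R :=
  aeval ![X 0 ^ 2, X 1 ^ 2, X 0 ^ 2 * X 1 + X 0 * X 1 ^ 2]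

variable {R}

theorem constantsPresentation_rename_castSucc (a : MvPolynomial (Fin 2) R) :
    constantsPresentation R (rename Fin.castSucc a) = expand 2 a := by
  suffices (constantsPresentation R).comp (rename Fin.castSucc) = expand 2 from
    DFunLike.congr_fun this a
  exact algHom_ext fun i => by fin_cases i <;> simp [constantsPresentation]

theorem constantsPresentation_X_zero : constantsPresentation R (X 0) = X 0 ^ 2 := by
  simp [constantsPresentation]

theorem constantsPresentation_X_one : constantsPresentation R (X 1) = X 1 ^ 2 := by
  simp [constantsPresentation]

theorem constantsPresentation_X_two :
    constantsPresentation R (X 2) = X 0 ^ 2 * X 1 + X 0 * X 1 ^ 2 := by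
  simp [constantsPresentation]

theorem range_constantsPresentation :
    (constantsPresentation R).range =
      Algebra.adjoin R {X 0 ^ 2, X 1 ^ 2, X 0 ^ 2 * X 1 + X 0 * X 1 ^ 2} := by
  rw [constantsPresentation, ← Algebra.adjoin_range_eq_range_aeval]
  simp only [Matrix.range_cons, Matrix.range_empty, Set.union_empty, Set.singleton_union]

theorem constantsPresentation_relation [CharP R 2] :
    constantsPresentation R (X 2 ^ 2 + X 0 ^ 2 * X 1 + X 0 * X 1 ^ 2) = 0 := by
  simp only [map_add, map_mul, map_pow, constantsPresentation_X_zero, constantsPresentation_X_one,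
    constantsPresentation_X_two]
  linear_combination (X 0 ^ 4 * X 1 ^ 2 + X 0 ^ 3 * X 1 ^ 3 + X 0 ^ 2 * X 1 ^ 4) *
    CharTwo.two_eq_zero (R := MvPolynomial (Fin 2) R)

theorem ker_constantsPresentation [CharP R 2] :
    RingHom.ker (constantsPresentation R).toRingHom =
      Ideal.span {X 2 ^ 2 + X 0 ^ 2 * X 1 + X 0 * X 1 ^ 2} := by
  have hrel : (X 2 ^ 2 + X 0 ^ 2 * X 1 + X 0 * X 1 ^ 2 : MvPolynomial (Fin 3) R) =
      X 2 ^ 2 + rename Fin.castSucc (X 0 ^ 2 * X 1 + X 0 * X 1 ^ 2) := by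
    simp only [map_add, map_mul, map_pow, rename_X, Fin.castSucc_zero, Fin.castSucc_one]
    ring
  ext q
  simp only [RingHom.mem_ker, AlgHom.toRingHom_eq_coe, RingHom.coe_coe, Ideal.mem_span_singleton]
  constructor
  · intro hq
    obtain ⟨h, a, b, rfl⟩ := exists_eq_X_last_sq_add_mul_add (X 0 ^ 2 * X 1 + X 0 * X 1 ^ 2) q
    rw [show Fin.last 2 = 2 from rfl, ← hrel] at hq ⊢
    have hab : expand 2 a + X 0 * expand 2 (X 1 * b) + X 1 * expand 2 (X 0 * b)
        + X 0 * X 1 * expand 2 0 = 0 := by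
      rw [map_add, map_add, map_mul, map_mul, constantsPresentation_relation,
        constantsPresentation_rename_castSucc, constantsPresentation_rename_castSucc,
        constantsPresentation_X_two] at hq
      simp only [map_mul, expand_X, map_zero]
      linear_combination hq
    obtain ⟨rfl, hb, -, -⟩ := expand_two_decomposition_eq_zero (by decide) hab
    obtain rfl : b = 0 := by simpa using hb
    simp
  · rintro ⟨h, rfl⟩
    simp [constantsPresentation_relation]

variable [CharP R 2] (δ : Derivation R (MvPolynomial (Fin 2) R) (MvPolynomial (Fin 2) R))

theorem derivation_constantsPresentation (hx : δ (X 0) = X 0 ^ 2) (hy : δ (X 1) = X 1 ^ 2)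
    (q : MvPolynomial (Fin 3) R) : δ (constantsPresentation R q) = 0 := by
  induction q using MvPolynomial.induction_on with
  | C r => rw [algHom_C, δ.map_algebraMap]
  | add f g hf hg => rw [map_add, map_add, hf, hg, add_zero]
  | mul_X f i hf =>
    rw [map_mul, δ.leibniz, hf, smul_zero, add_zero]
    suffices δ (constantsPresentation R (X i)) = 0 by rw [this, smul_zero]
    match i with
    | 0 => rw [constantsPresentation_X_zero, δ.map_pow_char]
    | 1 => rw [constantsPresentation_X_one, δ.map_pow_char]
    | 2 =>
      simp only [constantsPresentation_X_two, map_add, δ.leibniz, δ.map_pow_char, hx, hy,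
        smul_eq_mul]
      linear_combination (X 0 ^ 2 * X 1 ^ 2) *
        CharTwo.two_eq_zero (R := MvPolynomial (Fin 2) R)

theorem setOf_derivation_eq_zero [IsDomain R] (hx : δ (X 0) = X 0 ^ 2)
    (hy : δ (X 1) = X 1 ^ 2) :
    {f | δ f = 0} = ((constantsPresentation R).range : Set (MvPolynomial (Fin 2) R)) := by
  ext f
  simp only [Set.mem_ofPred_eq, SetLike.mem_coe, AlgHom.mem_range]
  refine ⟨fun hf => ?_, ?_⟩
  · obtain ⟨a, b, c, d, rfl⟩ := exists_expand_two_decomposition f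
    have hδ : expand 2 (X 0 * b + X 1 * c) + X 0 * expand 2 (X 1 * d)
        + X 1 * expand 2 (X 0 * d) + X 0 * X 1 * expand 2 0 = 0 := by
      simp only [map_add, δ.leibniz, derivation_expand_eq_zero, hx, hy, smul_eq_mul] at hf
      simp only [map_add, map_mul, expand_X, map_zero]
      linear_combination hf
    obtain ⟨hbc, hd, -, -⟩ := expand_two_decomposition_eq_zero (by decide) hδ
    obtain rfl : d = 0 := by simpa using hd
    obtain ⟨g, rfl, rfl⟩ := exists_eq_X_mul_of_X_mul_add_X_mul_eq_zero (by decide) hbc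
    refine ⟨rename Fin.castSucc a + X 2 * rename Fin.castSucc g, ?_⟩
    simp only [map_add, map_mul, map_neg, map_zero, constantsPresentation_rename_castSucc, expand_X]
    rw [constantsPresentation_X_two]
    linear_combination (X 0 ^ 2 * X 1 * expand 2 g) *
      CharTwo.two_eq_zero (R := MvPolynomial (Fin 2) R)
  · rintro ⟨q, rfl⟩
    exact derivation_constantsPresentation δ hx hy q

end

end MvPolynomial

open MvPolynomial

/-- In characteristic 2, for the derivation `δ` of `k[x,y]` with `δ x = x²`, `δ y = y²`, the
ring of constants equals `k[x², y², x²y + xy²]`, and this ring is isomorphic to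
`k[X,Y,Z]/(Z² + X²Y + XY²)` via `X ↦ x²`, `Y ↦ y²`, `Z ↦ x²y + xy²` (formalized by saying
the evaluation map `X ↦ x², Y ↦ y², Z ↦ x²y + xy²` has kernel `(Z² + X²Y + XY²)` and range
`k[x², y², x²y + xy²]`). -/
theorem stmt3 (k : Type*) [Field k] [CharP k 2]
    (δ : Derivation k (MvPolynomial (Fin 2) k) (MvPolynomial (Fin 2) k))
    (hx : δ (X 0) = X 0 ^ 2) (hy : δ (X 1) = X 1 ^ 2)
    (φ : MvPolynomial (Fin 3) k →ₐ[k] MvPolynomial (Fin 2) k)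
    (hφ : φ = aeval ![X 0 ^ 2, X 1 ^ 2, X 0 ^ 2 * X 1 + X 0 * X 1 ^ 2]) :
    {f : MvPolynomial (Fin 2) k | δ f = 0} =
      (Algebra.adjoin k {(X 0 ^ 2 : MvPolynomial (Fin 2) k), X 1 ^ 2, X 0 ^ 2 * X 1 + X 0 * X 1 ^ 2} :
        Set (MvPolynomial (Fin 2) k)) ∧
    φ.range = Algebra.adjoin k {(X 0 ^ 2 : MvPolynomial (Fin 2) k), X 1 ^ 2, X 0 ^ 2 * X 1 + X 0 * X 1 ^ 2} ∧
    RingHom.ker φ.toRingHom =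
      Ideal.span {X 2 ^ 2 + X 0 ^ 2 * X 1 + X 0 * X 1 ^ 2} := by
  obtain rfl : φ = constantsPresentation k := hφ
  refine ⟨?_, range_constantsPresentation, ker_constantsPresentation⟩
  rw [setOf_derivation_eq_zero δ hx hy, range_constantsPresentation]
end

section
/- Let k be a field of characteristic p > 0 and let F ∈ k[x] be a polynomial whose (p−1)-st formal derivative F^{(p−1)} is zero and with deg F ≤ d − 1. Then there exists G ∈ k[x] with deg G ≤ d and G' = F. -/
open Polynomial Finset

/-- In characteristic `p > 0`, a polynomial `F ∈ k[x]` with vanishing `(p−1)`-st iterated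
formal derivative and `deg F ≤ d − 1` admits an antiderivative `G` with `deg G ≤ d`. -/
theorem stmt7 (k : Type*) [Field k] (p : ℕ) [hp : Fact p.Prime] [CharP k p]
    (d : ℕ) (hd : 1 ≤ d) (F : Polynomial k)
    (hder : (fun q : Polynomial k => Polynomial.derivative q)^[p - 1] F = 0)
    (hdeg : F.natDegree ≤ d - 1) :
    ∃ G : Polynomial k, G.natDegree ≤ d ∧ Polynomial.derivative G = F := by
  have hp1 : 1 ≤ p := hp.out.one_lt.le
  -- key: coefficients at indices j with p ∣ j+1 vanish
  have key : ∀ j : ℕ, p ∣ j + 1 → F.coeff j = 0 := by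
    intro j hj
    have hjp : p - 1 ≤ j := by
      have := Nat.le_of_dvd (Nat.succ_pos j) hj
      omega
    have hco := congrArg (fun q => Polynomial.coeff q (j - (p - 1))) hder
    simp only [Polynomial.coeff_iterate_derivative, Polynomial.coeff_zero] at hco
    rw [Nat.sub_add_cancel hjp] at hco
    have hnd : ¬ p ∣ j.descFactorial (p - 1) := by
      rw [Nat.descFactorial_eq_prod_range]
      intro hdvd
      obtain ⟨i, hi, hdi⟩ := (Nat.Prime.prime hp.out).exists_mem_finset_dvd hdvd
      rw [Finset.mem_range] at hi
      -- p ∣ j - i and p ∣ j + 1, hence p ∣ i + 1 with i + 1 < p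
      have h1 : p ∣ (j + 1) - (j - i) := Nat.dvd_sub hj hdi
      have : (j + 1) - (j - i) = i + 1 := by omega
      rw [this] at h1
      have := Nat.le_of_dvd (Nat.succ_pos i) h1
      omega
    have hne : ((j.descFactorial (p - 1) : ℕ) : k) ≠ 0 := by
      rwa [Ne, CharP.cast_eq_zero_iff k p]
    rw [nsmul_eq_mul, mul_eq_zero] at hco
    exact hco.resolve_left hne
  -- construct the antiderivative
  refine ⟨∑ j ∈ Finset.range d, Polynomial.C (F.coeff j / ((j : k) + 1)) * Polynomial.X ^ (j + 1),
    ?_, ?_⟩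
  · exact Polynomial.natDegree_sum_le_of_forall_le _ _ fun j hj =>
      le_trans (Polynomial.natDegree_C_mul_X_pow_le _ _)
        (by simpa using Nat.add_one_le_iff.mpr (Finset.mem_range.mp hj))
  · rw [map_sum]
    have hrw : ∀ j ∈ Finset.range d,
        Polynomial.derivative (Polynomial.C (F.coeff j / ((j : k) + 1)) * Polynomial.X ^ (j + 1))
          = Polynomial.C (F.coeff j) * Polynomial.X ^ j := by
      intro j _
      rw [Polynomial.derivative_C_mul_X_pow]
      simp only [Nat.add_sub_cancel, Nat.cast_add, Nat.cast_one]
      by_cases h : ((j : k) + 1) = 0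
      · have hpdvd : p ∣ j + 1 := by
          rw [← CharP.cast_eq_zero_iff k p]
          push_cast
          exact h
        rw [key j hpdvd, h]
        simp
      · rw [div_mul_cancel₀ _ h]
    rw [Finset.sum_congr rfl hrw]
    conv_rhs => rw [F.as_sum_range' d (lt_of_le_of_lt hdeg (by omega))]
    simp [Polynomial.C_mul_X_pow_eq_monomial]
end

section
/- Let k be a field of characteristic p > 0, and let δ = ∂/∂x + F(x)·y²·∂/∂y be a derivation of k[x,y] where F ∈ k[x]. If δ is p-closed in the sense that δ^p is a k[x,y]-multiple of δ (equivalently here δ^p lies in the span of δ over the function field), then the (p−1)-st formal derivative of F is zero: F^{(p−1)} = 0. -/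
open MvPolynomial

/-- Let `δ = ∂/∂x + F(x) y² ∂/∂y` on `k[x,y]` (char `p > 0`), i.e. `δ x = 1`,
`δ y = F(x) y²`. If `δ` is `p`-closed in the sense that `δ^p` is a `k[x,y]`-multiple of
`δ`, then the `(p−1)`-st formal derivative of `F` vanishes. -/
theorem stmt11 (k : Type*) [Field k] (p : ℕ) [hp : Fact p.Prime] [CharP k p]
    (F : Polynomial k)
    (δ : Derivation k (MvPolynomial (Fin 2) k) (MvPolynomial (Fin 2) k))
    (hx : δ (X 0) = 1)
    (hy : δ (X 1) = Polynomial.aeval (X 0 : MvPolynomial (Fin 2) k) F * X 1 ^ 2)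
    (hclosed : ∃ h : MvPolynomial (Fin 2) k,
      ∀ f : MvPolynomial (Fin 2) k, (δ.toLinearMap ^ p) f = h * δ f) :
    (fun q : Polynomial k => Polynomial.derivative q)^[p - 1] F = 0 := by
  obtain ⟨h, hh⟩ := hclosed
  have pow_apply : ∀ n (f : MvPolynomial (Fin 2) k), (δ.toLinearMap ^ n) f = (fun g => δ g)^[n] f := by
    intro n f
    rw [Module.End.pow_apply]
    rfl
  -- δ of aeval
  have haev : ∀ q : Polynomial k,
      δ (Polynomial.aeval (X 0 : MvPolynomial (Fin 2) k) q)
        = Polynomial.aeval (X 0 : MvPolynomial (Fin 2) k) (Polynomial.derivative q) := by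
    intro q
    rw [Derivation.map_aeval, hx, smul_eq_mul, mul_one]
  -- iterate of 1 is 0
  have h0 : ∀ m, (fun g => δ g)^[m] (0 : MvPolynomial (Fin 2) k) = 0 := by
    intro m
    induction m with
    | zero => rfl
    | succ m ih => rw [Function.iterate_succ_apply', ih, map_zero]
  have h1 : ∀ n, 1 ≤ n → (fun g => δ g)^[n] (1 : MvPolynomial (Fin 2) k) = 0 := by
    intro n hn
    obtain ⟨m, rfl⟩ : ∃ m, n = m + 1 := ⟨n - 1, by omega⟩
    rw [Function.iterate_succ_apply, Derivation.map_one_eq_zero, h0]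
  -- h = 0
  have hp2 : 2 ≤ p := hp.out.two_le
  have hzero : h = 0 := by
    have := hh (X 0)
    rw [pow_apply, hx, mul_one] at this
    rw [← this]
    obtain ⟨m, hm⟩ : ∃ m, p = m + 1 := ⟨p - 1, by omega⟩
    rw [hm, Function.iterate_succ_apply, hx, h1 m (by omega)]
  -- key induction
  have key : ∀ n, ∃ g : MvPolynomial (Fin 2) k, (fun f => δ f)^[n + 1] (X 1)
      = Polynomial.aeval (X 0 : MvPolynomial (Fin 2) k)
          ((fun q : Polynomial k => Polynomial.derivative q)^[n] F) * X 1 ^ 2 + X 1 ^ 3 * g := by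
    intro n
    induction n with
    | zero => exact ⟨0, by simpa using hy⟩
    | succ n ih =>
      obtain ⟨g, hg⟩ := ih
      refine ⟨Polynomial.aeval (X 0 : MvPolynomial (Fin 2) k)
          ((fun q : Polynomial k => Polynomial.derivative q)^[n] F) * (2 * Polynomial.aeval (X 0 : MvPolynomial (Fin 2) k) F)
          + δ g + 3 * X 1 * Polynomial.aeval (X 0 : MvPolynomial (Fin 2) k) F * g, ?_⟩
      rw [Function.iterate_succ_apply', hg]
      simp only [map_add, Derivation.leibniz, Derivation.leibniz_pow, haev, hy,
        Function.iterate_succ_apply', smul_eq_mul]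
      ring
    -- conclude
  have hδp : (fun f => δ f)^[p] (X 1) = 0 := by
    have := hh (X 1)
    rw [pow_apply] at this
    rw [this, hzero, zero_mul]
  obtain ⟨g, hg⟩ := key (p - 1)
  rw [show p - 1 + 1 = p by omega, hδp] at hg
  set Q := (fun q : Polynomial k => Polynomial.derivative q)^[p - 1] F with hQ
  -- push to Polynomial (Polynomial k)
  set φ : MvPolynomial (Fin 2) k →ₐ[k] Polynomial (Polynomial k) :=
    MvPolynomial.aeval ![Polynomial.C Polynomial.X, Polynomial.X] with hφ
  have hφ0 : φ (X 0) = Polynomial.C Polynomial.X := by simp [hφ]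
  have hφ1 : φ (X 1) = Polynomial.X := by simp [hφ]
  have heq := congrArg φ hg.symm
  have hCQ : (Polynomial.aeval (Polynomial.C Polynomial.X : Polynomial (Polynomial k))) Q
      = Polynomial.C Q := by
    have h2 := Polynomial.aeval_algHom_apply
      (Polynomial.CAlgHom (R := k) (A := Polynomial k)) Polynomial.X Q
    rw [Polynomial.aeval_X_left_apply] at h2
    simpa [Polynomial.CAlgHom] using h2
  rw [map_add, map_mul, map_mul, map_pow, map_pow, hφ1, map_zero,
    ← Polynomial.aeval_algHom_apply, hφ0, hCQ] at heq
  have hc2 := congrArg (fun r => Polynomial.coeff r 2) heq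
  simp only [Polynomial.coeff_add, Polynomial.coeff_zero,
    Polynomial.coeff_X_pow_mul'] at hc2
  simpa using hc2
end
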